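/- Let k be a field of characteristic zero, X a finite type equipped with a fixed-point-free involution c : X → X, and Σ a subset of X such that Σ and c(Σ) are disjoint with union X; let g = |Σ|. Fix a linear order on X, let V be the k-vector space with basis (e_x)_{x∈X}, and in Λ(V) set L = ∑_{σ∈Σ} e_σ ∧ e_{cσ}, writing e_S for the ordered wedge product over a subset S ⊆ X. Let I ⊆ Σ and J ⊆ c(Σ) with |I| + |J| = i ≤ g. Then L^{g-i} ∧ e_{I∪J} lies in the k-linear span of the vectors e_{(I∪K) ∪ (J∪c(K))}, where K runs over the subsets of Σ of cardinality g - i satisfying K ∩ I = ∅ and c(K) ∩ J = ∅. -/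

import Mathlib

/-- The basis vector `e_x` of `V = X → k` inside the exterior algebra `Λ(V)`. -/
noncomputable def eVec (k : Type*) {X : Type*} [Field k] [DecidableEq X] (x : X) :
    ExteriorAlgebra k (X → k) :=
  ExteriorAlgebra.ι k (Pi.single x 1)

/-- The ordered wedge product `e_S = ⋀_{x ∈ S} e_x` over a finite subset `S ⊆ X`,
taken in the fixed linear order on `X`. -/
noncomputable def eWedge (k : Type*) {X : Type*} [Field k] [LinearOrder X] (S : Finset X) :
    ExteriorAlgebra k (X → k) :=
  ((S.sort (· ≤ ·)).map (eVec k)).prod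

/-- The isotypic component `L_σ = e_σ ∧ e_{cσ}` of the Lefschetz class. -/
noncomputable def Lsigma (k : Type*) {X : Type*} [Field k] [DecidableEq X] (c : X → X) (σ : X) :
    ExteriorAlgebra k (X → k) :=
  eVec k σ * eVec k (c σ)

/-- The product `L_K = ∏_{σ ∈ K} L_σ` (the factors `L_σ` have even degree, hence commute,
so the ordered product represents the product). -/
noncomputable def LK (k : Type*) {X : Type*} [Field k] [LinearOrder X] (c : X → X)
    (K : Finset X) : ExteriorAlgebra k (X → k) :=
  ((K.sort (· ≤ ·)).map (Lsigma k c)).prod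

/-- The Lefschetz class `L = ∑_{σ ∈ Σ} L_σ = ∑_{σ ∈ Σ} e_σ ∧ e_{cσ}`. -/
noncomputable def Lef (k : Type*) {X : Type*} [Field k] [DecidableEq X] (c : X → X)
    (S : Finset X) : ExteriorAlgebra k (X → k) :=
  ∑ σ ∈ S, Lsigma k c σ

/-!
Each `L_σ = e_σ ∧ e_{cσ}` has even degree, so it is central in `Λ(V)`, and it squares to zero.
Hence `L^n` is a linear combination of the products `L_K = ∏_{σ ∈ K} L_σ` over the `n`-element
subsets `K ⊆ Σ`. The product `L_K ∧ e_T` is the wedge of the basis vectors listed by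
`σ, cσ` (for `σ ∈ K`) followed by `T`: it vanishes if some vector is repeated, and otherwise it
is, up to sign, `e_{K ∪ cK ∪ T}` with `K ∪ cK` disjoint from `T`.
-/

namespace ExteriorAlgebra

variable {R M : Type*} [CommRing R] [AddCommGroup M] [Module R M]

theorem ι_mul_ι_eq_neg_swap (x y : M) : ι R x * ι R y = -(ι R y * ι R x) :=
  eq_neg_of_add_eq_zero_left (ι_add_mul_swap x y)

theorem ι_mul_prod_map_ι_of_mem {m : M} {l : List M} (h : m ∈ l) :
    ι R m * (l.map (ι R)).prod = 0 := by
  induction l with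
  | nil => simp at h
  | cons a t ih =>
    rw [List.map_cons, List.prod_cons, ← mul_assoc]
    rcases List.mem_cons.1 h with rfl | h
    · rw [ι_sq_zero, zero_mul]
    · rw [ι_mul_ι_eq_neg_swap, neg_mul, mul_assoc, ih h, mul_zero, neg_zero]

theorem prod_map_ι_eq_zero_of_not_nodup {l : List M} (h : ¬ l.Nodup) :
    (l.map (ι R)).prod = 0 := by
  induction l with
  | nil => simp at h
  | cons a t ih =>
    rw [List.map_cons, List.prod_cons]
    by_cases ha : a ∈ t
    · exact ι_mul_prod_map_ι_of_mem ha
    · rw [ih fun ht => h (List.nodup_cons.2 ⟨ha, ht⟩), mul_zero]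

theorem exists_prod_map_ι_eq_smul_of_perm {l₁ l₂ : List M} (h : l₁.Perm l₂) :
    ∃ a : R, (l₁.map (ι R)).prod = a • (l₂.map (ι R)).prod := by
  induction h with
  | nil => exact ⟨1, (one_smul R _).symm⟩
  | cons x _ ih =>
    obtain ⟨a, ha⟩ := ih
    exact ⟨a, by rw [List.map_cons, List.prod_cons, List.map_cons, List.prod_cons, ha,
      mul_smul_comm]⟩
  | swap x y l =>
    refine ⟨-1, ?_⟩
    simp only [List.map_cons, List.prod_cons, ← mul_assoc, ι_mul_ι_eq_neg_swap y x]
    simp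
  | trans _ _ ih₁ ih₂ =>
    obtain ⟨a, ha⟩ := ih₁
    obtain ⟨b, hb⟩ := ih₂
    exact ⟨a * b, by rw [ha, hb, smul_smul]⟩

theorem commute_ι_mul_ι (x y : M) (z : ExteriorAlgebra R M) : Commute (ι R x * ι R y) z := by
  induction z using ExteriorAlgebra.induction with
  | algebraMap r => exact (Algebra.commutes r _).symm
  | ι m =>
    rw [Commute, SemiconjBy, mul_assoc, ι_mul_ι_eq_neg_swap y m, mul_neg, ← mul_assoc,
      ι_mul_ι_eq_neg_swap x m, neg_mul, neg_neg, mul_assoc]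
  | mul p q hp hq => exact hp.mul_right hq
  | add p q hp hq => exact hp.add_right hq

theorem ι_mul_ι_mul_self (x y : M) : (ι R x * ι R y) * (ι R x * ι R y) = 0 := by
  rw [← mul_assoc, (commute_ι_mul_ι x y (ι R x)).eq, ← mul_assoc (ι R x), ι_sq_zero, zero_mul,
    zero_mul]

end ExteriorAlgebra

namespace Submodule

variable {R A : Type*} [CommSemiring R] [Semiring A] [Algebra R A]

theorem mul_mem_span_of_forall_mem {s t u : Set A} {x y : A} (hx : x ∈ span R s)
    (hy : y ∈ span R t) (h : ∀ a ∈ s, ∀ b ∈ t, a * b ∈ span R u) : x * y ∈ span R u := by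
  have hxy := mul_mem_mul hx hy
  rw [span_mul_span] at hxy
  refine span_le.2 ?_ hxy
  rintro _ ⟨a, ha, b, hb, rfl⟩
  exact h a ha b hb

end Submodule

open ExteriorAlgebra Submodule

section DecidableEq

variable {k X : Type*} [Field k] [DecidableEq X]

theorem map_eVec_eq_map_ι (l : List X) :
    l.map (eVec k) = (l.map fun x => Pi.single x (1 : k)).map (ι k) := by
  rw [List.map_map]
  rfl

theorem prod_map_eVec_eq_zero_of_not_nodup {l : List X} (h : ¬ l.Nodup) :
    (l.map (eVec k)).prod = 0 := by
  rw [map_eVec_eq_map_ι]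
  exact prod_map_ι_eq_zero_of_not_nodup fun h' => h (h'.of_map _)

theorem commute_Lsigma (c : X → X) (σ : X) (z : ExteriorAlgebra k (X → k)) :
    Commute (Lsigma k c σ) z :=
  commute_ι_mul_ι _ _ z

theorem Lsigma_mul_self (c : X → X) (σ : X) : Lsigma k c σ * Lsigma k c σ = 0 :=
  ι_mul_ι_mul_self _ _

theorem prod_map_Lsigma_mul_of_mem (c : X → X) {σ : X} {l : List X} (h : σ ∈ l) :
    (l.map (Lsigma k c)).prod * Lsigma k c σ = 0 := by
  induction l with
  | nil => simp at h
  | cons a t ih =>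
    rw [List.map_cons, List.prod_cons, mul_assoc]
    rcases List.mem_cons.1 h with rfl | h
    · rw [← (commute_Lsigma c _ _).eq, ← mul_assoc, Lsigma_mul_self, zero_mul]
    · rw [ih h, mul_zero]

theorem prod_map_Lsigma_perm (c : X → X) {l₁ l₂ : List X} (h : l₁.Perm l₂) :
    (l₁.map (Lsigma k c)).prod = (l₂.map (Lsigma k c)).prod :=
  (h.map _).prod_eq'
    (List.pairwise_map.2 (List.pairwise_of_forall fun σ _ => commute_Lsigma c σ _))

theorem prod_map_eVec_flatMap_pair (c : X → X) (l : List X) :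
    ((l.flatMap fun σ => [σ, c σ]).map (eVec k)).prod = (l.map (Lsigma k c)).prod := by
  induction l with
  | nil => rfl
  | cons a t ih =>
    rw [List.flatMap_cons, List.map_append, List.prod_append, ih, List.map_cons, List.prod_cons]
    simp [Lsigma, mul_assoc]

theorem toFinset_flatMap_pair (c : X → X) (l : List X) :
    (l.flatMap fun σ => [σ, c σ]).toFinset = l.toFinset ∪ l.toFinset.image c := by
  ext x
  simp only [List.mem_toFinset, List.mem_flatMap, List.mem_cons, List.not_mem_nil, or_false,
    Finset.mem_union, Finset.mem_image]
  constructor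
  · rintro ⟨σ, hσ, rfl | rfl⟩
    exacts [Or.inl hσ, Or.inr ⟨σ, hσ, rfl⟩]
  · rintro (hx | ⟨σ, hσ, rfl⟩)
    exacts [⟨x, hx, Or.inl rfl⟩, ⟨σ, hσ, Or.inr rfl⟩]

end DecidableEq

section LinearOrder

variable {k X : Type*} [Field k] [LinearOrder X]

theorem exists_prod_map_eVec_eq_smul_eWedge {l : List X} (hl : l.Nodup) :
    ∃ a : k, (l.map (eVec k)).prod = a • eWedge k l.toFinset := by
  have hperm : l.Perm (l.toFinset.sort (· ≤ ·)) :=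
    ((l.toFinset.sort_perm_toList _).trans (List.toFinset_toList hl)).symm
  simpa only [eWedge, map_eVec_eq_map_ι] using exists_prod_map_ι_eq_smul_of_perm (R := k)
    (hperm.map fun x => Pi.single x (1 : k))

theorem LK_eq_prod_map_eVec (c : X → X) (K : Finset X) :
    LK k c K = (((K.sort (· ≤ ·)).flatMap fun σ => [σ, c σ]).map (eVec k)).prod :=
  (prod_map_eVec_flatMap_pair c _).symm

theorem LK_mul_Lsigma_of_mem (c : X → X) {K : Finset X} {σ : X} (hσ : σ ∈ K) :
    LK k c K * Lsigma k c σ = 0 :=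
  prod_map_Lsigma_mul_of_mem c ((Finset.mem_sort _).2 hσ)

theorem LK_mul_Lsigma_of_notMem (c : X → X) {K : Finset X} {σ : X} (hσ : σ ∉ K) :
    LK k c K * Lsigma k c σ = LK k c (insert σ K) := by
  have hperm : ((insert σ K).sort (· ≤ ·)).Perm (σ :: K.sort (· ≤ ·)) :=
    List.perm_of_nodup_nodup_toFinset_eq (Finset.sort_nodup _ _)
      (List.nodup_cons.2 ⟨by simpa using hσ, Finset.sort_nodup _ _⟩) (by simp)
  rw [LK, LK, prod_map_Lsigma_perm c hperm, List.map_cons, List.prod_cons,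
    (commute_Lsigma c σ _).eq]

theorem Lef_pow_mem_span_LK (c : X → X) (S : Finset X) (n : ℕ) :
    Lef k c S ^ n ∈ span k (LK k c '' {K | K ⊆ S ∧ K.card = n}) := by
  induction n with
  | zero =>
    refine subset_span ⟨∅, ⟨Finset.empty_subset S, rfl⟩, ?_⟩
    rw [pow_zero, LK, Finset.sort_empty, List.map_nil, List.prod_nil]
  | succ n ih =>
    rw [pow_succ]
    refine mul_mem_span_of_forall_mem (t := Lsigma k c '' S) ih
      (sum_mem fun σ hσ => subset_span ⟨σ, hσ, rfl⟩) ?_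
    rintro _ ⟨K, ⟨hKS, hKcard⟩, rfl⟩ _ ⟨σ, hσS, rfl⟩
    by_cases hσK : σ ∈ K
    · rw [LK_mul_Lsigma_of_mem c hσK]
      exact zero_mem _
    · rw [LK_mul_Lsigma_of_notMem c hσK]
      exact subset_span ⟨insert σ K, ⟨Finset.insert_subset hσS hKS,
        by rw [Finset.card_insert_of_notMem hσK, hKcard]⟩, rfl⟩

theorem LK_mul_eWedge_eq_zero_or (c : X → X) (K T : Finset X) :
    LK k c K * eWedge k T = 0 ∨ Disjoint (K ∪ K.image c) T ∧
      ∃ a : k, LK k c K * eWedge k T = a • eWedge k (K ∪ K.image c ∪ T) := by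
  set A := (K.sort (· ≤ ·)).flatMap fun σ => [σ, c σ]
  have hprod : LK k c K * eWedge k T = ((A ++ T.sort (· ≤ ·)).map (eVec k)).prod := by
    rw [List.map_append, List.prod_append, LK_eq_prod_map_eVec, eWedge]
  have hA : A.toFinset = K ∪ K.image c := by
    rw [toFinset_flatMap_pair, Finset.sort_toFinset]
  by_cases hnd : (A ++ T.sort (· ≤ ·)).Nodup
  · right
    refine ⟨?_, ?_⟩
    · rw [← hA, ← T.sort_toFinset (· ≤ ·), List.disjoint_toFinset_iff_disjoint]
      exact List.disjoint_iff_ne.2 (List.nodup_append.1 hnd).2.2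
    · obtain ⟨a, ha⟩ := exists_prod_map_eVec_eq_smul_eWedge (k := k) hnd
      rw [List.toFinset_append, hA, Finset.sort_toFinset] at ha
      exact ⟨a, hprod.trans ha⟩
  · left
    rw [hprod, prod_map_eVec_eq_zero_of_not_nodup hnd]

end LinearOrder

theorem stmt6_general (k X : Type*) [Field k] [LinearOrder X] (c : X → X) (S : Finset X) (g : ℕ)
    (I J : Finset X) (i : ℕ) :
    Lef k c S ^ (g - i) * eWedge k (I ∪ J) ∈
      Submodule.span k
        ((fun K : Finset X => eWedge k ((I ∪ K) ∪ (J ∪ K.image c))) ''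
          {K : Finset X | K ⊆ S ∧ K.card = g - i ∧ K ∩ I = ∅ ∧ K.image c ∩ J = ∅}) := by
  refine mul_mem_span_of_forall_mem (Lef_pow_mem_span_LK c S (g - i))
    (mem_span_singleton_self (R := k) _) ?_
  rintro _ ⟨K, ⟨hKS, hKcard⟩, rfl⟩ _ rfl
  rcases LK_mul_eWedge_eq_zero_or (k := k) c K (I ∪ J) with h | ⟨hdisj, a, h⟩
  · rw [h]
    exact zero_mem _
  · rw [h, Finset.union_union_union_comm, Finset.union_comm K I, Finset.union_comm (K.image c) J]
    refine smul_mem _ a (subset_span ⟨K, ⟨hKS, hKcard, ?_, ?_⟩, rfl⟩)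
    · exact Finset.disjoint_iff_inter_eq_empty.1
        (hdisj.mono Finset.subset_union_left Finset.subset_union_left)
    · exact Finset.disjoint_iff_inter_eq_empty.1
        (hdisj.mono Finset.subset_union_right Finset.subset_union_right)

/-- Lemma 2.3 of the paper, in the exterior-algebra model: for `I ⊆ Σ`, `J ⊆ cΣ` with
`|I| + |J| = i ≤ g`, the class `L^{g-i} ∧ e_{I∪J}` lies in the span of the classes
`e_{(I∪K) ∪ (J∪cK)}` with `K ⊆ Σ`, `|K| = g - i`, `K ∩ I = ∅` and `c(K) ∩ J = ∅`. -/
theorem stmt6 (k X : Type*) [Field k] [CharZero k] [Fintype X] [LinearOrder X]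
    (c : X → X) (hinv : Function.Involutive c) (hfree : ∀ x : X, c x ≠ x)
    (S : Finset X) (hdisj : Disjoint S (S.image c)) (hcover : S ∪ S.image c = Finset.univ)
    (g : ℕ) (hg : g = S.card)
    (I J : Finset X) (hI : I ⊆ S) (hJ : J ⊆ S.image c)
    (i : ℕ) (hcard : I.card + J.card = i) (hig : i ≤ g) :
    Lef k c S ^ (g - i) * eWedge k (I ∪ J) ∈
      Submodule.span k
        ((fun K : Finset X => eWedge k ((I ∪ K) ∪ (J ∪ K.image c))) ''
          {K : Finset X | K ⊆ S ∧ K.card = g - i ∧ K ∩ I = ∅ ∧ K.image c ∩ J = ∅}) :=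
  stmt6_general k X c S g I J i
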